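/- For any R > 0 and any ε ∈ (0,1), there exists a finite set Θ of vectors in the closed Euclidean ball of radius R in ℝ^d, with cardinality at most (1 + 16R/ε)^d (equivalently, log|Θ| ≤ d·log(1 + 16R/ε)), such that for every θ with ‖θ‖₂ ≤ R there is some θ' ∈ Θ with sup_{s ∈ 𝒮} ∑_{a ∈ 𝒜} |π_θ(a|s) − π_{θ'}(a|s)| ≤ ε. -/

import Mathlib

open scoped BigOperators

/-- The soft-max policy with parameter `θ` induced by the feature map `φ`:
`π_θ(a|s) = exp(⟨φ(s,a), θ⟩) / ∑_{a'} exp(⟨φ(s,a'), θ⟩)`. -/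
noncomputable def softmaxPolicy {S A : Type*} [Fintype A] {d : ℕ}
    (φ : S → A → EuclideanSpace ℝ (Fin d)) (θ : EuclideanSpace ℝ (Fin d))
    (s : S) (a : A) : ℝ :=
  Real.exp (inner ℝ (φ s a) θ : ℝ) / ∑ a' : A, Real.exp (inner ℝ (φ s a') θ : ℝ)

/-!
A maximal `ε/8`-separated subset of the ball of radius `R` is an `ε/8`-net of it, and since the
balls of radius `ε/16` around its points are disjoint and lie in the ball of radius
`R + ε/16`, comparing volumes bounds its size by `(1 + 16R/ε)^d`. If `‖θ - θ'‖ ≤ δ`, every logit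
`⟨φ(s,a), θ⟩` moves by at most `δ`, so each soft-max probability changes at most by a factor
`e^{2δ}`; hence the `ℓ¹` distance is at most `2(e^{2δ} - 1)`, which is `≤ ε` when `δ ≤ ε/8`.
-/

open Metric MeasureTheory Module
open scoped NNReal ENNReal

section Packing

variable {E : Type*} [NormedAddCommGroup E] [NormedSpace ℝ E] [FiniteDimensional ℝ E]

theorem Metric.IsSeparated.card_le_of_subset_closedBall {T : Finset E} {x : E} {R : ℝ} {r : ℝ≥0}
    (hR : 0 ≤ R) (hr : 0 < r) (hTx : (T : Set E) ⊆ closedBall x R)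
    (hT : IsSeparated r (T : Set E)) :
    (T.card : ℝ) ≤ (1 + 2 * R / r) ^ finrank ℝ E := by
  -- volumes are compared for a Haar measure on the Borel σ-algebra
  let _ : MeasurableSpace E := borel E
  have : BorelSpace E := ⟨rfl⟩
  set μ : Measure E := Measure.addHaar
  have hr₂ : (0 : ℝ) < r / 2 := by positivity
  have hdisj : (T : Set E).PairwiseDisjoint (fun t => ball t (r / 2)) := by
    intro t ht t' ht' hne
    have hsep : (r : ℝ≥0∞) < edist t t' := hT ht ht' hne
    rw [edist_nndist, ENNReal.coe_lt_coe, ← NNReal.coe_lt_coe, coe_nndist] at hsep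
    exact ball_disjoint_ball (by linarith)
  have hsub : (⋃ t ∈ T, ball t (r / 2)) ⊆ ball x (R + r / 2) := by
    simp only [Set.iUnion_subset_iff]
    intro t ht
    exact ball_subset_ball' (by linarith [mem_closedBall.1 (hTx ht)])
  have hvol : ∑ t ∈ T, μ (ball t (r / 2)) ≤ μ (ball x (R + r / 2)) := by
    rw [← measure_biUnion_finset hdisj fun t _ => measurableSet_ball]
    exact measure_mono hsub
  have hcard : (T.card : ℝ) * (r / 2) ^ finrank ℝ E ≤ (R + r / 2) ^ finrank ℝ E := by
    simp only [Measure.addHaar_ball_of_pos μ _ hr₂, Finset.sum_const, nsmul_eq_mul, ← mul_assoc,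
      Measure.addHaar_ball_of_pos μ _ (by positivity : 0 < R + r / 2)] at hvol
    rwa [ENNReal.mul_le_mul_iff_left (measure_ball_pos μ _ one_pos).ne' measure_ball_lt_top.ne,
      ← ENNReal.ofReal_natCast, ← ENNReal.ofReal_mul (by positivity),
      ENNReal.ofReal_le_ofReal_iff (by positivity)] at hvol
  rw [← le_div_iff₀ (by positivity), ← div_pow] at hcard
  refine hcard.trans_eq ?_
  congr 1
  field_simp
  ring

theorem packingNumber_closedBall_ne_top {x : E} {R : ℝ} {r : ℝ≥0} (hR : 0 ≤ R) (hr : 0 < r) :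
    packingNumber r (closedBall x R) ≠ ⊤ := by
  set N := ⌊(1 + 2 * R / r) ^ finrank ℝ E⌋₊
  refine ne_top_of_le_ne_top (ENat.natCast_ne_top N) (iSup₂_le fun C hC => iSup_le fun hsep => ?_)
  have hfinset : ∀ T : Finset E, (T : Set E) ⊆ C → T.card ≤ N := fun T hT =>
    Nat.le_floor <| (IsSeparated.subset hT hsep).card_le_of_subset_closedBall hR hr (hT.trans hC)
  have hfin : C.Finite := by
    by_contra hinf
    obtain ⟨T, hTC, hTcard⟩ := Set.Infinite.exists_subset_card_eq hinf (N + 1)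
    have := hfinset T hTC
    omega
  rw [hfin.encard_eq_coe_toFinset_card]
  exact_mod_cast hfinset _ hfin.coe_toFinset.subset

theorem exists_finset_isCover_closedBall (x : E) {R : ℝ} {r : ℝ≥0} (hR : 0 ≤ R) (hr : 0 < r) :
    ∃ T : Finset E, (T : Set E) ⊆ closedBall x R ∧ IsCover r (closedBall x R) T ∧
      (T.card : ℝ) ≤ (1 + 2 * R / r) ^ finrank ℝ E := by
  have hpack := packingNumber_closedBall_ne_top (x := x) hR hr
  have hfin : (maximalSeparatedSet r (closedBall x R)).Finite := by
    rw [← Set.encard_ne_top_iff, encard_maximalSeparatedSet hpack]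
    exact hpack
  refine ⟨hfin.toFinset, ?_, ?_, ?_⟩
  · simpa using maximalSeparatedSet_subset
  · simpa using isCover_maximalSeparatedSet hpack
  · refine IsSeparated.card_le_of_subset_closedBall (x := x) hR hr ?_ ?_
    · simpa using maximalSeparatedSet_subset
    · simpa using isSeparated_maximalSeparatedSet

end Packing

section Softmax

variable {A : Type*} [Fintype A]

noncomputable def softmax (z : A → ℝ) (a : A) : ℝ :=
  Real.exp (z a) / ∑ b, Real.exp (z b)

lemma sum_exp_pos (z : A → ℝ) (a : A) : 0 < ∑ b, Real.exp (z b) :=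
  Finset.sum_pos (fun b _ => Real.exp_pos (z b)) ⟨a, Finset.mem_univ a⟩

lemma softmax_nonneg (z : A → ℝ) (a : A) : 0 ≤ softmax z a :=
  div_nonneg (Real.exp_pos _).le (sum_exp_pos z a).le

lemma sum_softmax [Nonempty A] (z : A → ℝ) : ∑ a, softmax z a = 1 := by
  simp_rw [softmax, ← Finset.sum_div]
  rw [div_self (sum_exp_pos z (Classical.arbitrary A)).ne']

lemma softmax_le_exp_mul_softmax {z w : A → ℝ} {δ : ℝ} (h : ∀ a, |z a - w a| ≤ δ) (a : A) :
    softmax z a ≤ Real.exp (2 * δ) * softmax w a := by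
  have hexp : ∀ b, Real.exp (z b) ≤ Real.exp δ * Real.exp (w b) ∧
      Real.exp (w b) ≤ Real.exp δ * Real.exp (z b) := fun b => by
    rw [← Real.exp_add, ← Real.exp_add, Real.exp_le_exp, Real.exp_le_exp]
    constructor <;> linarith [abs_le.1 (h b)]
  have hsum : ∑ b, Real.exp (w b) ≤ Real.exp δ * ∑ b, Real.exp (z b) := by
    rw [Finset.mul_sum]
    exact Finset.sum_le_sum fun b _ => (hexp b).2
  have hz := sum_exp_pos z a
  have hw := sum_exp_pos w a
  rw [softmax, softmax, two_mul, Real.exp_add, div_le_iff₀ hz]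
  calc Real.exp (z a) ≤ Real.exp δ * Real.exp (w a) := (hexp a).1
    _ = Real.exp δ * (Real.exp (w a) / ∑ b, Real.exp (w b)) * ∑ b, Real.exp (w b) := by
      field_simp
    _ ≤ Real.exp δ * (Real.exp (w a) / ∑ b, Real.exp (w b)) *
          (Real.exp δ * ∑ b, Real.exp (z b)) := by
      gcongr
    _ = _ := by ring

lemma sum_abs_sub_le_of_le_mul {p q : A → ℝ} {c : ℝ} (hp : ∀ a, 0 ≤ p a) (hq : ∀ a, 0 ≤ q a)
    (hc : 1 ≤ c) (hpq : ∀ a, p a ≤ c * q a) (hqp : ∀ a, q a ≤ c * p a) :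
    ∑ a, |p a - q a| ≤ (c - 1) * (∑ a, p a + ∑ a, q a) := by
  rw [← Finset.sum_add_distrib, Finset.mul_sum]
  refine Finset.sum_le_sum fun a _ => abs_sub_le_iff.2 ⟨?_, ?_⟩
  · nlinarith [hp a, hq a, hpq a]
  · nlinarith [hp a, hq a, hqp a]

lemma sum_abs_softmax_sub_le [Nonempty A] {z w : A → ℝ} {δ : ℝ} (h : ∀ a, |z a - w a| ≤ δ) :
    ∑ a, |softmax z a - softmax w a| ≤ 2 * (Real.exp (2 * δ) - 1) := by
  have hδ : 0 ≤ δ := (abs_nonneg _).trans (h (Classical.arbitrary A))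
  have h' : ∀ a, |w a - z a| ≤ δ := fun a => abs_sub_comm (w a) (z a) ▸ h a
  calc _ ≤ (Real.exp (2 * δ) - 1) * (∑ a, softmax z a + ∑ a, softmax w a) :=
        sum_abs_sub_le_of_le_mul (softmax_nonneg z) (softmax_nonneg w)
          (Real.one_le_exp (by linarith)) (softmax_le_exp_mul_softmax h)
          (softmax_le_exp_mul_softmax h')
    _ = 2 * (Real.exp (2 * δ) - 1) := by rw [sum_softmax, sum_softmax]; ring

end Softmax

lemma softmaxPolicy_eq_softmax {S A : Type*} [Fintype A] {d : ℕ}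
    (φ : S → A → EuclideanSpace ℝ (Fin d)) (θ : EuclideanSpace ℝ (Fin d)) (s : S) :
    softmaxPolicy φ θ s = softmax fun a => inner ℝ (φ s a) θ :=
  rfl

lemma sum_abs_softmaxPolicy_sub_le {S A : Type*} [Fintype A] [Nonempty A] {d : ℕ}
    {φ : S → A → EuclideanSpace ℝ (Fin d)} {s : S} (hφ : ∀ a, ‖φ s a‖ ≤ 1)
    (θ θ' : EuclideanSpace ℝ (Fin d)) :
    ∑ a, |softmaxPolicy φ θ s a - softmaxPolicy φ θ' s a| ≤ 2 * (Real.exp (2 * ‖θ - θ'‖) - 1) := by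
  rw [softmaxPolicy_eq_softmax, softmaxPolicy_eq_softmax]
  refine sum_abs_softmax_sub_le fun a => ?_
  rw [← inner_sub_right]
  calc _ ≤ ‖φ s a‖ * ‖θ - θ'‖ := abs_real_inner_le_norm _ _
    _ ≤ ‖θ - θ'‖ := mul_le_of_le_one_left (norm_nonneg _) (hφ a)

lemma two_mul_exp_div_four_sub_one_le {ε : ℝ} (h₀ : 0 ≤ ε) (h₁ : ε ≤ 1) :
    2 * (Real.exp (ε / 4) - 1) ≤ ε := by
  have h := (abs_le.1 (Real.abs_exp_sub_one_sub_id_le (x := ε / 4)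
    (by rw [abs_of_nonneg (by positivity)]; linarith))).2
  nlinarith

/-- Covering of the soft-max policy class of radius `R` in the `‖·‖_{∞,1}` metric:
for any `ε ∈ (0,1)` there is an `ε`-cover of cardinality at most `(1 + 16R/ε)^d`. -/
theorem statement_5 {S A : Type*} [Fintype A] [Nonempty A] {d : ℕ}
    (φ : S → A → EuclideanSpace ℝ (Fin d))
    (hφ : ∀ s a, ‖φ s a‖ ≤ 1)
    (R ε : ℝ) (hR : 0 < R) (hε : ε ∈ Set.Ioo (0 : ℝ) 1) :
    ∃ Θ : Finset (EuclideanSpace ℝ (Fin d)),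
      (∀ θ' ∈ Θ, ‖θ'‖ ≤ R) ∧
      (Θ.card : ℝ) ≤ (1 + 16 * R / ε) ^ d ∧
      ∀ θ : EuclideanSpace ℝ (Fin d), ‖θ‖ ≤ R →
        ∃ θ' ∈ Θ, ∀ s : S,
          ∑ a : A, |softmaxPolicy φ θ s a - softmaxPolicy φ θ' s a| ≤ ε := by
  obtain ⟨hε₀, hε₁⟩ := hε
  let r : ℝ≥0 := ⟨ε / 8, by positivity⟩
  have hr : (r : ℝ) = ε / 8 := rfl
  obtain ⟨Θ, hΘR, hΘcover, hΘcard⟩ :=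
    exists_finset_isCover_closedBall (0 : EuclideanSpace ℝ (Fin d)) hR.le
      (show 0 < r from div_pos hε₀ (by norm_num))
  refine ⟨Θ, fun θ' hθ' => mem_closedBall_zero_iff.1 (hΘR hθ'), ?_, fun θ hθ => ?_⟩
  · rw [finrank_euclideanSpace_fin, hr] at hΘcard
    exact hΘcard.trans_eq (by ring)
  obtain ⟨θ', hθ', hθθ'⟩ : ∃ θ' ∈ Θ, dist θ θ' ≤ (r : ℝ) := by
    simpa [← NNReal.coe_le_coe, r] using
      hΘcover.subset_iUnion_closedBall (mem_closedBall_zero_iff.2 hθ)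
  rw [dist_eq_norm, hr] at hθθ'
  refine ⟨θ', hθ', fun s => ?_⟩
  calc _ ≤ 2 * (Real.exp (2 * ‖θ - θ'‖) - 1) := sum_abs_softmaxPolicy_sub_le (hφ s) θ θ'
    _ ≤ 2 * (Real.exp (ε / 4) - 1) := by gcongr; linarith
    _ ≤ ε := two_mul_exp_div_four_sub_one_le hε₀.le hε₁.le
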